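/- Let 0 < β < α < 2. Then L^⟨α⟩* contains no nontrivial (2−β)-stable distribution: if μ ∈ ID(ℝ^d) is (2−β)-stable and μ ∈ L^⟨α⟩*, then μ is a point mass δ_c. Conversely, if 0 < α ≤ β < 2, then every (2−β)-stable distribution belongs to L^⟨α⟩*. -/

import Mathlib

open MeasureTheory Set
open scoped ENNReal
noncomputable section

/-- `ℝ^d` with the Euclidean norm. -/
abbrev Rd (d : ℕ) := EuclideanSpace ℝ (Fin d)

/-- Geometric inversion `ι(x) = |x|⁻² x` (with the junk value `ι(0) = 0`). -/
def iota {d : ℕ} (x : Rd d) : Rd d := (‖x‖ ^ 2)⁻¹ • x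

/-- A Lévy measure on `ℝ^d`: `ν({0}) = 0` and `∫ (|x|² ∧ 1) ν(dx) < ∞`. -/
def IsLevyMeasure {d : ℕ} (ν : Measure (Rd d)) : Prop :=
  ν {0} = 0 ∧ (∫⁻ x, ENNReal.ofReal (min (‖x‖ ^ 2) 1) ∂ν) < ⊤

/-- The inversion `ν'` of a Lévy measure: `ν'(B) = ∫ 1_B(ι(x)) |x|² ν(dx)`. -/
def invLevy {d : ℕ} (ν : Measure (Rd d)) : Measure (Rd d) :=
  Measure.map iota ((ν.restrict {0}ᶜ).withDensity fun x => ENNReal.ofReal (‖x‖ ^ 2))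

/-- The Lévy–Khintchine exponent of the infinitely divisible distribution with
triplet `(A, ν, γ)`, so that its characteristic function is `exp ∘ levyExponent`. -/
def levyExponent {d : ℕ} (A : Matrix (Fin d) (Fin d) ℝ) (ν : Measure (Rd d))
    (γ : Rd d) (z : Rd d) : ℂ :=
  -(1 / 2 : ℂ) * ((∑ i, ∑ j, z i * A i j * z j : ℝ) : ℂ) +
    (∫ x : Rd d,
      (Complex.exp (Complex.I * ((inner ℝ z x : ℝ) : ℂ)) - 1 -
        Complex.I * ((inner ℝ z x : ℝ) : ℂ) *
          ((Set.indicator {y : Rd d | ‖y‖ ≤ 1} (fun _ => (1 : ℝ)) x : ℝ) : ℂ)) ∂ν) +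
    Complex.I * ((inner ℝ γ z : ℝ) : ℂ)

/-- The location parameter of the inversion `μ'`:
`γ_{μ'} = -γ_μ + ∫_{|x|=1} x ν_μ(dx)`. -/
def invGamma {d : ℕ} (ν : Measure (Rd d)) (γ : Rd d) : Rd d :=
  -γ + ∫ x in {x : Rd d | ‖x‖ = 1}, x ∂ν

/-- Dilation `T_b ν`, the pushforward of `ν` under `x ↦ b • x`. -/
def dilate {d : ℕ} (b : ℝ) (ν : Measure (Rd d)) : Measure (Rd d) :=
  Measure.map (fun x => b • x) ν

/-- `μ ∈ L^⟨α⟩*`: the infinitely divisible distribution `μ` with triplet `(A, ν, γ)`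
satisfies: for every `b > 1` there is `σ_b ∈ ID` with
`μ̂(z) = μ̂(bz)^{b^{α-2}} σ̂_b(z)`, stated at the level of Lévy–Khintchine exponents. -/
def memLstar {d : ℕ} (α : ℝ) (A : Matrix (Fin d) (Fin d) ℝ) (ν : Measure (Rd d))
    (γ : Rd d) : Prop :=
  ∀ b : ℝ, 1 < b →
    ∃ (A' : Matrix (Fin d) (Fin d) ℝ) (ν' : Measure (Rd d)) (γ' : Rd d),
      A'.PosSemidef ∧ IsLevyMeasure ν' ∧
      ∀ z : Rd d, levyExponent A ν γ z
        = ((b ^ (α - 2) : ℝ) : ℂ) * levyExponent A ν γ (b • z)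
          + levyExponent A' ν' γ' z

/-- The triplet `(A, ν, γ)` is (the triplet of) a `γexp`-stable distribution:
for every `b > 1` there is `c ∈ ℝ^d` with `μ^{b^{γexp}} = (T_b μ) * δ_c`,
stated at the level of Lévy–Khintchine exponents. -/
def IsStableTriplet {d : ℕ} (γexp : ℝ) (A : Matrix (Fin d) (Fin d) ℝ)
    (ν : Measure (Rd d)) (γ : Rd d) : Prop :=
  ∀ b : ℝ, 1 < b → ∃ c : Rd d, ∀ z : Rd d,
    ((b ^ γexp : ℝ) : ℂ) * levyExponent A ν γ z
      = levyExponent A ν γ (b • z) + Complex.I * ((inner ℝ c z : ℝ) : ℂ)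


/-- the integrand of the Lévy–Khintchine exponent -/
def LF {d : ℕ} (z x : Rd d) : ℂ :=
  Complex.exp (Complex.I * ((inner ℝ z x : ℝ) : ℂ)) - 1 -
    Complex.I * ((inner ℝ z x : ℝ) : ℂ) *
      ((Set.indicator {y : Rd d | ‖y‖ ≤ 1} (fun _ => (1 : ℝ)) x : ℝ) : ℂ)

lemma LF_re {d : ℕ} (z x : Rd d) : (LF z x).re = Real.cos (inner ℝ z x : ℝ) - 1 := by
  simp [LF, Complex.exp_re, Complex.mul_re, Complex.mul_im, Real.exp_zero]

lemma LF_norm_le {d : ℕ} (z x : Rd d) :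
    ‖LF z x‖ ≤ (3 * ‖z‖ ^ 2 + 2) * min (‖x‖ ^ 2) 1 := by
  have hθ : |(inner ℝ z x : ℝ)| ≤ ‖z‖ * ‖x‖ := abs_real_inner_le_norm z x
  set θ : ℝ := (inner ℝ z x : ℝ) with hθdef
  have hexp : ‖Complex.exp (Complex.I * (θ : ℂ))‖ = 1 := by
    simp [Complex.norm_exp]
  have hznn : (0:ℝ) ≤ ‖z‖ := norm_nonneg _
  have hxnn : (0:ℝ) ≤ ‖x‖ := norm_nonneg _
  by_cases hx : ‖x‖ ≤ 1
  · have hind : Set.indicator {y : Rd d | ‖y‖ ≤ 1} (fun _ => (1:ℝ)) x = 1 :=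
      Set.indicator_of_mem (show x ∈ {y : Rd d | ‖y‖ ≤ 1} from hx) _
    have hmin : min (‖x‖ ^ 2) 1 = ‖x‖ ^ 2 := min_eq_left (by nlinarith)
    rw [LF, ← hθdef, hind, hmin]
    push_cast
    rw [mul_one]
    by_cases hθ1 : |θ| ≤ 1
    · have habs : ‖Complex.I * (θ:ℂ)‖ ≤ 1 := by
        simpa [map_mul] using hθ1
      have := Complex.norm_exp_sub_one_sub_id_le habs
      have h2 : ‖Complex.I * (θ:ℂ)‖ ^ 2 = θ ^ 2 := by
        simp [map_mul, sq_abs]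
      rw [h2] at this
      have hb : ‖Complex.exp (Complex.I * (θ:ℂ)) - 1 - Complex.I * (θ:ℂ)‖ ≤ θ ^ 2 := this
      nlinarith [sq_nonneg (‖z‖ * ‖x‖ - |θ|), abs_nonneg θ, sq_abs θ]
    · push_neg at hθ1
      have h1 : ‖Complex.exp (Complex.I * (θ:ℂ)) - 1 - Complex.I * (θ:ℂ)‖
          ≤ ‖Complex.exp (Complex.I * (θ:ℂ)) - 1‖ + ‖Complex.I * (θ:ℂ)‖ := norm_sub_le _ _
      have h2 : ‖Complex.exp (Complex.I * (θ:ℂ)) - 1‖ ≤ 2 := by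
        calc ‖Complex.exp (Complex.I * (θ:ℂ)) - 1‖
            ≤ ‖Complex.exp (Complex.I * (θ:ℂ))‖ + ‖(1:ℂ)‖ := norm_sub_le _ _
          _ ≤ 2 := by rw [hexp]; norm_num
      have h3 : ‖Complex.I * (θ:ℂ)‖ = |θ| := by
        simp
      nlinarith [sq_nonneg (‖z‖ * ‖x‖ - |θ|), abs_nonneg θ, sq_abs θ]
  · have hind : Set.indicator {y : Rd d | ‖y‖ ≤ 1} (fun _ => (1:ℝ)) x = 0 :=
      Set.indicator_of_notMem (show x ∉ {y : Rd d | ‖y‖ ≤ 1} from hx) _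
    have hmin : min (‖x‖ ^ 2) 1 = 1 := min_eq_right (by nlinarith [not_le.mp hx])
    rw [LF, ← hθdef, hind, hmin]
    push_cast
    rw [mul_zero, sub_zero]
    have h2 : ‖Complex.exp (Complex.I * (θ:ℂ)) - 1‖ ≤ 2 := by
      calc ‖Complex.exp (Complex.I * (θ:ℂ)) - 1‖
          ≤ ‖Complex.exp (Complex.I * (θ:ℂ))‖ + ‖(1:ℂ)‖ := norm_sub_le _ _
        _ ≤ 2 := by rw [hexp]; norm_num
    nlinarith [sq_nonneg ‖z‖]

lemma LF_aesm {d : ℕ} (ν : Measure (Rd d)) (z : Rd d) :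
    AEStronglyMeasurable (fun x => LF z x) ν := by
  have h1 : Continuous fun x : Rd d => (inner ℝ z x : ℝ) := continuous_const.inner continuous_id
  have hset : MeasurableSet {y : Rd d | ‖y‖ ≤ 1} :=
    (isClosed_le continuous_norm continuous_const).measurableSet
  have hind : Measurable fun x : Rd d =>
      Set.indicator {y : Rd d | ‖y‖ ≤ 1} (fun _ => (1:ℝ)) x :=
    Measurable.indicator measurable_const hset
  have hm : Measurable fun x => LF z x := by
    unfold LF
    exact (((Complex.continuous_exp.comp
        (continuous_const.mul (Complex.continuous_ofReal.comp h1))).measurable).sub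
        measurable_const).sub
      (((measurable_const.mul (Complex.measurable_ofReal.comp h1.measurable))).mul
        (Complex.measurable_ofReal.comp hind))
  exact hm.aestronglyMeasurable

lemma integrable_min_sq {d : ℕ} {ν : Measure (Rd d)}
    (hν : (∫⁻ x, ENNReal.ofReal (min (‖x‖ ^ 2) 1) ∂ν) < ⊤) :
    Integrable (fun x : Rd d => min (‖x‖ ^ 2) 1) ν := by
  refine ⟨((continuous_norm.pow 2).min continuous_const).aestronglyMeasurable, ?_⟩
  rw [HasFiniteIntegral]
  have heq : ∀ x : Rd d, ‖min (‖x‖ ^ 2) 1‖ₑ = ENNReal.ofReal (min (‖x‖ ^ 2) 1) :=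
    fun x => Real.enorm_eq_ofReal (le_min (sq_nonneg _) zero_le_one)
  simpa only [heq] using hν

lemma LF_integrable {d : ℕ} {ν : Measure (Rd d)}
    (hν : (∫⁻ x, ENNReal.ofReal (min (‖x‖ ^ 2) 1) ∂ν) < ⊤) (z : Rd d) :
    Integrable (fun x => LF z x) ν := by
  refine Integrable.mono' ((integrable_min_sq hν).const_mul (3 * ‖z‖ ^ 2 + 2))
    (LF_aesm ν z) (ae_of_all _ fun x => LF_norm_le z x)

lemma quad_eq_dot {d : ℕ} (A : Matrix (Fin d) (Fin d) ℝ) (x : Fin d → ℝ) :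
    ∑ i, ∑ j, x i * A i j * x j = dotProduct x (A.mulVec x) := by
  simp only [dotProduct, Matrix.mulVec, Finset.mul_sum]
  exact Finset.sum_congr rfl fun i _ => Finset.sum_congr rfl fun j _ => by ring

lemma quad_nonneg {d : ℕ} {A : Matrix (Fin d) (Fin d) ℝ} (hA : A.PosSemidef) (z : Rd d) :
    0 ≤ ∑ i, ∑ j, z i * A i j * z j := by
  rw [quad_eq_dot]
  simpa using hA.dotProduct_mulVec_nonneg (WithLp.ofLp z)

lemma re_levyExponent' {d : ℕ} (A : Matrix (Fin d) (Fin d) ℝ) (ν : Measure (Rd d)) (γ : Rd d)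
    (hν : (∫⁻ x, ENNReal.ofReal (min (‖x‖ ^ 2) 1) ∂ν) < ⊤) (z : Rd d) :
    (levyExponent A ν γ z).re
      = -(∑ i, ∑ j, z i * A i j * z j) / 2 + ∫ x, (Real.cos (inner ℝ z x : ℝ) - 1) ∂ν := by
  have hre : ∫ x, (Real.cos (inner ℝ z x : ℝ) - 1) ∂ν = (∫ x, LF z x ∂ν).re := by
    have h := integral_re (LF_integrable hν z)
    simp only [RCLike.re_to_complex] at h
    rw [← h]
    exact integral_congr_ae (ae_of_all _ fun x => (LF_re z x).symm)
  rw [levyExponent, Complex.add_re, Complex.add_re, hre]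
  have h1 : (-(1 / 2 : ℂ) * ((∑ i, ∑ j, z i * A i j * z j : ℝ) : ℂ)).re
      = -(∑ i, ∑ j, z i * A i j * z j) / 2 := by
    simp [Complex.mul_re]; ring
  have h2 : (Complex.I * ((inner ℝ γ z : ℝ) : ℂ)).re = 0 := by simp
  rw [h1, h2, add_zero]
  rfl

lemma re_levyExponent_nonpos {d : ℕ} {A : Matrix (Fin d) (Fin d) ℝ} {ν : Measure (Rd d)}
    {γ : Rd d} (hA : A.PosSemidef) (hν : IsLevyMeasure ν) (z : Rd d) :
    (levyExponent A ν γ z).re ≤ 0 := by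
  rw [re_levyExponent' A ν γ hν.2 z]
  have h1 := quad_nonneg hA z
  have h2 : ∫ x, (Real.cos (inner ℝ z x : ℝ) - 1) ∂ν ≤ 0 :=
    integral_nonpos fun x => sub_nonpos.mpr (Real.cos_le_one _)
  linarith

lemma psd_quad_zero {d : ℕ} {A : Matrix (Fin d) (Fin d) ℝ} (hA : A.PosSemidef)
    (h : ∀ x : Fin d → ℝ, dotProduct x (A.mulVec x) = 0) : A = 0 := by
  ext i j
  have hsym : A j i = A i j := by
    have h2 := hA.1
    rw [Matrix.IsHermitian] at h2
    conv_lhs => rw [← h2]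
    simp [Matrix.conjTranspose_apply]
  have hii := h (Pi.single i 1)
  have hjj := h (Pi.single j 1)
  have hij := h (Pi.single i 1 + Pi.single j 1)
  simp only [add_dotProduct, dotProduct_add, Matrix.mulVec_add,
    Matrix.mulVec_single, single_dotProduct, dotProduct_single,
    mul_one, one_mul] at hii hjj hij
  simp at hii hjj hij
  simp only [Matrix.zero_apply]
  linarith

lemma cos_rat_forall_eq_one {t : ℝ} (h : ∀ q : ℚ, Real.cos ((q : ℝ) * t) = 1) : t = 0 := by
  by_contra ht
  have htpos : 0 < |t| := abs_pos.mpr ht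
  have h2π : (0:ℝ) < 2 * Real.pi / |t| := by positivity
  obtain ⟨q, hq0, hq1⟩ := exists_rat_btwn h2π
  have hqpos : (0:ℝ) < (q:ℝ) := hq0
  have habs : |(q:ℝ) * t| < 2 * Real.pi := by
    rw [abs_mul, abs_of_pos hqpos]
    calc (q:ℝ) * |t| < (2 * Real.pi / |t|) * |t| := mul_lt_mul_of_pos_right hq1 htpos
      _ = 2 * Real.pi := div_mul_cancel₀ _ (ne_of_gt htpos)
  have hne : (q:ℝ) * t ≠ 0 := mul_ne_zero (ne_of_gt hqpos) ht
  exact hne ((Real.cos_eq_one_iff_of_lt_of_lt (abs_lt.mp habs).1 (abs_lt.mp habs).2).mp (h q))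

lemma nu_eq_zero {d : ℕ} {ν : Measure (Rd d)} (hν : IsLevyMeasure ν)
    (h : ∀ z : Rd d, ∫ x, (Real.cos (inner ℝ z x : ℝ) - 1) ∂ν = 0) : ν = 0 := by
  have hint : ∀ z : Rd d, Integrable (fun x => Real.cos (inner ℝ z x : ℝ) - 1) ν := by
    intro z
    have h1 := (LF_integrable hν.2 z).re
    refine h1.congr (ae_of_all _ fun x => ?_)
    simp only [RCLike.re_to_complex]
    exact LF_re z x
  have hz0 : ∀ z : Rd d, ∀ᵐ x ∂ν, Real.cos (inner ℝ z x : ℝ) = 1 := by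
    intro z
    have hgi : Integrable (fun x => 1 - Real.cos (inner ℝ z x : ℝ)) ν := by
      exact (hint z).neg.congr (ae_of_all _ fun x => by simp only [Pi.neg_apply]; ring)
    have hzero : ∫ x, (1 - Real.cos (inner ℝ z x : ℝ)) ∂ν = 0 := by
      have h2 : (fun x : Rd d => 1 - Real.cos (inner ℝ z x : ℝ))
          = fun x => -(Real.cos (inner ℝ z x : ℝ) - 1) := by funext x; ring
      rw [h2, integral_neg, h z, neg_zero]
    have := (integral_eq_zero_iff_of_nonneg
      (fun x => sub_nonneg.mpr (Real.cos_le_one _)) hgi).mp hzero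
    filter_upwards [this] with x hx
    have : (1:ℝ) - Real.cos (inner ℝ z x : ℝ) = 0 := hx
    linarith
  have hae : ∀ᵐ x ∂ν, ∀ p : ℚ × Fin d, Real.cos ((p.1 : ℝ) * x p.2) = 1 := by
    rw [ae_all_iff]
    intro p
    have hinner : ∀ x : Rd d,
        (inner ℝ ((p.1 : ℝ) • EuclideanSpace.single p.2 (1:ℝ)) x : ℝ) = (p.1 : ℝ) * x p.2 := by
      intro x
      rw [real_inner_smul_left, EuclideanSpace.inner_single_left]
      simp
    filter_upwards [hz0 ((p.1 : ℝ) • EuclideanSpace.single p.2 (1:ℝ))] with x hx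
    rwa [hinner x] at hx
  have hae0 : ∀ᵐ x ∂ν, x = (0 : Rd d) := by
    filter_upwards [hae] with x hx
    ext i
    simpa using cos_rat_forall_eq_one (fun q => hx (q, i))
  have hne : ν {x : Rd d | x ≠ 0} = 0 := by
    have := hae0
    rw [MeasureTheory.ae_iff] at this
    exact this
  have huniv : ν Set.univ = 0 := by
    have hsub : (Set.univ : Set (Rd d)) ⊆ {(0 : Rd d)} ∪ {x : Rd d | x ≠ 0} := by
      intro x _
      by_cases hx : x = 0
      · exact Or.inl (by simp [hx])
      · exact Or.inr hx
    have h1 : ν Set.univ ≤ ν ({(0 : Rd d)} ∪ {x : Rd d | x ≠ 0}) := measure_mono hsub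
    have h2 : ν ({(0 : Rd d)} ∪ {x : Rd d | x ≠ 0}) ≤ ν {(0 : Rd d)} + ν {x : Rd d | x ≠ 0} :=
      measure_union_le _ _
    rw [hν.1, hne] at h2
    exact le_antisymm (by simpa using h1.trans h2) zero_le
  exact Measure.measure_univ_eq_zero.mp huniv

lemma posSemidef_smul' {d : ℕ} {A : Matrix (Fin d) (Fin d) ℝ} (hA : A.PosSemidef)
    {t : ℝ} (ht : 0 ≤ t) : (t • A).PosSemidef := by
  refine ⟨?_, fun x => ?_⟩
  · have h1 := hA.1
    rw [Matrix.IsHermitian] at h1 ⊢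
    rw [Matrix.conjTranspose_smul, h1]
    simp
  · exact (hA.smul ht).2 x

lemma isLevy_smul {d : ℕ} {ν : Measure (Rd d)} (hν : IsLevyMeasure ν) (t : ℝ) :
    IsLevyMeasure (ENNReal.ofReal t • ν) := by
  constructor
  · simp [Measure.smul_apply, hν.1]
  · rw [lintegral_smul_measure]
    exact ENNReal.mul_lt_top ENNReal.ofReal_lt_top hν.2

lemma levyExponent_smul_triplet {d : ℕ} (A : Matrix (Fin d) (Fin d) ℝ) (ν : Measure (Rd d))
    (γ : Rd d) (c : Rd d) {t : ℝ} (ht : 0 ≤ t) (z : Rd d) :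
    levyExponent (t • A) (ENNReal.ofReal t • ν) (t • γ + c) z
      = (t : ℂ) * levyExponent A ν γ z + Complex.I * ((inner ℝ c z : ℝ) : ℂ) := by
  unfold levyExponent
  have hq : (∑ i, ∑ j, z i * (t • A) i j * z j) = t * ∑ i, ∑ j, z i * A i j * z j := by
    rw [Finset.mul_sum]
    refine Finset.sum_congr rfl fun i _ => ?_
    rw [Finset.mul_sum]
    refine Finset.sum_congr rfl fun j _ => ?_
    simp [Matrix.smul_apply, smul_eq_mul]
    ring
  have hint : (∫ x : Rd d, LF z x ∂(ENNReal.ofReal t • ν)) = (t : ℂ) * ∫ x : Rd d, LF z x ∂ν := by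
    rw [integral_smul_measure, ENNReal.toReal_ofReal ht, Complex.real_smul]
  have hin : (inner ℝ (t • γ + c) z : ℝ) = t * (inner ℝ γ z : ℝ) + (inner ℝ c z : ℝ) := by
    rw [inner_add_left, real_inner_smul_left]
  rw [hq, hin]
  have hint' : (∫ x : Rd d,
      (Complex.exp (Complex.I * ((inner ℝ z x : ℝ) : ℂ)) - 1 -
        Complex.I * ((inner ℝ z x : ℝ) : ℂ) *
          ((Set.indicator {y : Rd d | ‖y‖ ≤ 1} (fun _ => (1 : ℝ)) x : ℝ) : ℂ))
        ∂(ENNReal.ofReal t • ν))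
      = (t : ℂ) * ∫ x : Rd d,
      (Complex.exp (Complex.I * ((inner ℝ z x : ℝ) : ℂ)) - 1 -
        Complex.I * ((inner ℝ z x : ℝ) : ℂ) *
          ((Set.indicator {y : Rd d | ‖y‖ ≤ 1} (fun _ => (1 : ℝ)) x : ℝ) : ℂ)) ∂ν := hint
  rw [hint']
  push_cast
  ring

theorem statement19 {d : ℕ} (α β : ℝ) (A : Matrix (Fin d) (Fin d) ℝ)
    (ν : Measure (Rd d)) (γ : Rd d) (hA : A.PosSemidef) (hν : IsLevyMeasure ν) :
    -- if `0 < β < α < 2`, a `(2-β)`-stable distribution in `L^⟨α⟩*` is a point mass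
    ((0 < β ∧ β < α ∧ α < 2) → IsStableTriplet (2 - β) A ν γ →
      memLstar α A ν γ → (A = 0 ∧ ν = 0)) ∧
    -- if `0 < α ≤ β < 2`, every `(2-β)`-stable distribution belongs to `L^⟨α⟩*`
    ((0 < α ∧ α ≤ β ∧ β < 2) → IsStableTriplet (2 - β) A ν γ →
      memLstar α A ν γ) := by
  constructor
  · rintro ⟨hβ, hβα, hα2⟩ hstab hmem
    obtain ⟨c, hc⟩ := hstab 2 one_lt_two
    obtain ⟨A', ν', γ', hA', hν', heq⟩ := hmem 2 one_lt_two
    have hk : (1:ℝ) < (2:ℝ) ^ (α - β) :=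
      (Real.one_lt_rpow_iff_of_pos two_pos).mpr (Or.inl ⟨one_lt_two, sub_pos.mpr hβα⟩)
    have hpow : (2:ℝ) ^ (α - 2) * (2:ℝ) ^ (2 - β) = (2:ℝ) ^ (α - β) := by
      rw [← Real.rpow_add two_pos]; ring_nf
    have hre : ∀ z : Rd d, (levyExponent A ν γ z).re = 0 := by
      intro z
      have h1 := congrArg Complex.re (heq z)
      have h2 := congrArg Complex.re (hc z)
      rw [Complex.add_re, Complex.re_ofReal_mul] at h1
      rw [Complex.re_ofReal_mul, Complex.add_re] at h2
      have h2' : (Complex.I * ((inner ℝ c z : ℝ) : ℂ)).re = 0 := by simp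
      rw [h2'] at h2
      set a := (levyExponent A ν γ z).re with hadef
      set bb := (levyExponent A ν γ ((2:ℝ) • z)).re with hbdef
      set e := (levyExponent A' ν' γ' z).re with hedef
      have ha : a ≤ 0 := re_levyExponent_nonpos hA hν z
      have he : e ≤ 0 := re_levyExponent_nonpos hA' hν' z
      have hbb : bb = (2:ℝ) ^ ((2:ℝ) - β) * a := by linarith
      rw [hbb, ← mul_assoc, hpow] at h1
      have ha0 : 0 ≤ a := by nlinarith
      linarith
    have hzero : ∀ z : Rd d, (∑ i, ∑ j, z i * A i j * z j) = 0 ∧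
        ∫ x, (Real.cos (inner ℝ z x : ℝ) - 1) ∂ν = 0 := by
      intro z
      have h0 := hre z
      rw [re_levyExponent' A ν γ hν.2 z] at h0
      have h1 := quad_nonneg hA z
      have h2 : ∫ x, (Real.cos (inner ℝ z x : ℝ) - 1) ∂ν ≤ 0 :=
        integral_nonpos fun x => sub_nonpos.mpr (Real.cos_le_one _)
      constructor <;> linarith
    refine ⟨psd_quad_zero hA (fun x => ?_), nu_eq_zero hν (fun z => (hzero z).2)⟩
    rw [← quad_eq_dot]
    exact (hzero (WithLp.toLp 2 x)).1
  · rintro ⟨hα, hαβ, hβ2⟩ hstab b hb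
    obtain ⟨c, hc⟩ := hstab b hb
    have hb0 : (0:ℝ) < b := lt_trans one_pos hb
    have hpl : b ^ (α - β) ≤ 1 :=
      Real.rpow_le_one_of_one_le_of_nonpos hb.le (by linarith)
    have ht : (0:ℝ) ≤ 1 - b ^ (α - β) := by linarith
    refine ⟨(1 - b ^ (α - β)) • A, ENNReal.ofReal (1 - b ^ (α - β)) • ν,
      (1 - b ^ (α - β)) • γ + (b ^ (α - 2)) • c,
      posSemidef_smul' hA ht, isLevy_smul hν _, fun z => ?_⟩
    rw [levyExponent_smul_triplet A ν γ _ ht z]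
    have hpowC : ((b ^ (α - 2) : ℝ) : ℂ) * ((b ^ ((2:ℝ) - β) : ℝ) : ℂ)
        = ((b ^ (α - β) : ℝ) : ℂ) := by
      rw [← Complex.ofReal_mul, ← Real.rpow_add hb0]
      norm_num
    have hcz : (inner ℝ ((b ^ (α - 2) : ℝ) • c) z : ℝ) = b ^ (α - 2) * (inner ℝ c z : ℝ) :=
      real_inner_smul_left _ _ _
    rw [hcz]
    push_cast
    linear_combination ((b ^ (α - 2) : ℝ) : ℂ) * hc z - levyExponent A ν γ z * hpowC
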